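/- For j = 1,2 and every x ∈ ℂ one has K·Ĉ_j(−x) = (−1)^j·Ĉ_j(x). Consequently, for every x with arg x ∈ (0, π) (so that −x ∈ Π₋), K·C_j(−x) = (−1)^j·e^{−iπμ_j}·C_j(x). -/
import Mathlib

open Complex Matrix Set

noncomputable def Kmat : Matrix (Fin 2) (Fin 2) ℂ := !![1, 0; 0, -1]

noncomputable def cEven (c0 μj : ℂ) (k : ℕ) : ℂ :=
  (-1) ^ k * c0 / (2 ^ k * (Nat.factorial k) *
    ∏ s ∈ Finset.range k, (2 * μj + 1 + 2 * (s : ℂ)))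

noncomputable def cOdd (c0 μj : ℂ) (k : ℕ) : ℂ :=
  (-1) ^ k * c0 / (2 ^ k * (Nat.factorial k) *
    ∏ s ∈ Finset.range (k + 1), (2 * μj + 1 + 2 * (s : ℂ)))

/-- `Ĉ(x)` as a sum of its power series. -/
noncomputable def Chat (μ c10 c20 : ℂ) (x : ℂ) : Matrix (Fin 2) (Fin 2) ℂ :=
  ∑' k : ℕ, x ^ (2 * k) • !![x * cOdd c10 (-μ) k, cEven c20 μ k;
                             -(cEven c10 (-μ) k), x * cOdd c20 μ k]

/-- `μ_j`: `μ₁ = -μ` (index 0), `μ₂ = μ` (index 1). -/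
noncomputable def muIdx (μ : ℂ) : Fin 2 → ℂ := ![-μ, μ]

/-- `(-1)^j`: `-1` for `j = 1` (index 0), `1` for `j = 2` (index 1). -/
noncomputable def signIdx : Fin 2 → ℂ := ![-1, 1]

/-- The columns `C_j(x) = x^{μ_j} Ĉ_j(x)`. -/
noncomputable def Ccol (μ c10 c20 : ℂ) (x : ℂ) (j : Fin 2) : Fin 2 → ℂ :=
  fun i => x ^ (muIdx μ j) * Chat μ c10 c20 x i j

lemma Kmat_mul_Kmat : Kmat * Kmat = 1 := by
  ext i j; fin_cases i <;> fin_cases j <;>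
    simp [Kmat, Matrix.mul_apply, Fin.sum_univ_two]

/-- The involutive linear equivalence `M ↦ -(K M K)`. -/
noncomputable def negKL : Matrix (Fin 2) (Fin 2) ℂ ≃ₗ[ℂ] Matrix (Fin 2) (Fin 2) ℂ where
  toFun M := -(Kmat * M * Kmat)
  invFun M := -(Kmat * M * Kmat)
  map_add' M N := by noncomm_ring
  map_smul' a M := by simp [Matrix.mul_smul, Matrix.smul_mul]
  left_inv M := by
    simp only [mul_neg, neg_mul, neg_neg, ← Matrix.mul_assoc]
    rw [Matrix.mul_assoc (Kmat * Kmat * M), Kmat_mul_Kmat]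
    simp [Matrix.mul_assoc]
  right_inv M := by
    simp only [mul_neg, neg_mul, neg_neg, ← Matrix.mul_assoc]
    rw [Matrix.mul_assoc (Kmat * Kmat * M), Kmat_mul_Kmat]
    simp [Matrix.mul_assoc]

lemma Chat_neg (μ c10 c20 x : ℂ) :
    Chat μ c10 c20 (-x) = -(Kmat * Chat μ c10 c20 x * Kmat) := by
  have key : ∀ k : ℕ,
      (-x) ^ (2 * k) • !![(-x) * cOdd c10 (-μ) k, cEven c20 μ k;
          -(cEven c10 (-μ) k), (-x) * cOdd c20 μ k] =
      negKL.toContinuousLinearEquiv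
        (x ^ (2 * k) • !![x * cOdd c10 (-μ) k, cEven c20 μ k;
          -(cEven c10 (-μ) k), x * cOdd c20 μ k]) := by
    intro k
    have hx : (-x) ^ (2 * k) = x ^ (2 * k) := by
      rw [pow_mul, pow_mul, neg_sq]
    ext i j
    fin_cases i <;> fin_cases j <;>
      simp [negKL, hx, Kmat, Matrix.mul_apply, Fin.sum_univ_two,
        LinearEquiv.coe_toContinuousLinearEquiv] <;> ring
  calc Chat μ c10 c20 (-x)
      = ∑' k : ℕ, negKL.toContinuousLinearEquiv
          (x ^ (2 * k) • !![x * cOdd c10 (-μ) k, cEven c20 μ k;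
            -(cEven c10 (-μ) k), x * cOdd c20 μ k]) := tsum_congr key
    _ = negKL.toContinuousLinearEquiv (Chat μ c10 c20 x) :=
        (ContinuousLinearEquiv.map_tsum _).symm
    _ = -(Kmat * Chat μ c10 c20 x * Kmat) := rfl

lemma neg_cpow_of_arg (x : ℂ) (h1 : 0 < Complex.arg x) (h2 : Complex.arg x < Real.pi)
    (w : ℂ) : (-x) ^ w = Complex.exp (-(Real.pi : ℂ) * Complex.I * w) * x ^ w := by
  have hx : x ≠ 0 := by
    rintro rfl; simp at h1
  have him : 0 < x.im := by
    rcases lt_trichotomy x.im 0 with h | h | h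
    · exact absurd (Complex.arg_neg_iff.mpr h) (by linarith)
    · rcases lt_or_ge x.re 0 with hr | hr
      · exact absurd (Complex.arg_eq_pi_iff.mpr ⟨hr, h⟩) (by linarith)
      · exact absurd (Complex.arg_eq_zero_iff.mpr ⟨hr, h⟩) (by linarith)
    · exact h
  have hlog : Complex.log (-x) = Complex.log x - (Real.pi : ℂ) * Complex.I := by
    apply Complex.ext
    · simp [Complex.log_re]
    · simp [Complex.log_im, Complex.arg_neg_eq_arg_sub_pi_of_im_pos him]
  rw [Complex.cpow_def_of_ne_zero (neg_ne_zero.mpr hx),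
    Complex.cpow_def_of_ne_zero hx, hlog, ← Complex.exp_add]
  ring_nf

theorem stmt5 (μ c10 c20 : ℂ) (hμ : 0 < μ.re) (hc : c10 * c20 = 1)
    (hden : ∀ j : Fin 2, ∀ s : ℕ, 2 * muIdx μ j + 1 + 2 * (s : ℂ) ≠ 0) :
    (∀ j : Fin 2, ∀ x : ℂ,
      Kmat.mulVec (fun i => Chat μ c10 c20 (-x) i j) =
        signIdx j • (fun i => Chat μ c10 c20 x i j)) ∧
    (∀ j : Fin 2, ∀ x : ℂ, 0 < Complex.arg x → Complex.arg x < Real.pi →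
      Kmat.mulVec (Ccol μ c10 c20 (-x) j) =
        (signIdx j * Complex.exp (-(Real.pi : ℂ) * Complex.I * muIdx μ j)) •
          Ccol μ c10 c20 x j) := by
  have part1 : ∀ j : Fin 2, ∀ x : ℂ,
      Kmat.mulVec (fun i => Chat μ c10 c20 (-x) i j) =
        signIdx j • (fun i => Chat μ c10 c20 x i j) := by
    intro j x
    funext i
    rw [Chat_neg]
    fin_cases j <;> fin_cases i <;>
      simp [Kmat, signIdx, Matrix.mulVec, Matrix.vecMul, dotProduct,
        Fin.sum_univ_two, Matrix.mul_apply] <;> ring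
  refine ⟨part1, ?_⟩
  intro j x h1 h2
  have hC : Ccol μ c10 c20 (-x) j =
      ((-x) ^ (muIdx μ j)) • (fun i => Chat μ c10 c20 (-x) i j) := by
    funext i; simp [Ccol]
  rw [hC, Matrix.mulVec_smul, part1 j x,
    neg_cpow_of_arg x h1 h2 (muIdx μ j)]
  funext i
  simp [Ccol, signIdx, smul_smul]
  fin_cases j <;> simp [signIdx, muIdx] <;> ring
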